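/- arXiv:1501.04191 — 8 statements merged into one kernel-verified Lean document; each statement's English description precedes it below -/
import Mathlib

section
/- For any two nonzero vectors x and y in a real Hilbert space, if z := ⟨x/‖x‖, y/‖y‖⟩ · y/‖y‖ is the orthogonal projection of x/‖x‖ onto the line ℝy, then ‖x/‖x‖ − z‖ ≤ ‖x − y‖/‖y‖. -/
open RealInnerProductSpace

lemma aux_unit {X : Type*} [NormedAddCommGroup X] [InnerProductSpace ℝ X]
    (u v : X) (hu : ‖u‖ = 1) (hv : ‖v‖ = 1) (t : ℝ) :
    ‖u - ⟪u, v⟫ • v‖ ≤ ‖v - t • u‖ := by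
  have h1 : ‖u - ⟪u, v⟫ • v‖ ^ 2 = 1 - ⟪u, v⟫ ^ 2 := by
    rw [norm_sub_sq_real, real_inner_smul_right, norm_smul, hu, hv]
    simp [Real.norm_eq_abs, sq_abs]
    ring
  have h2 : ‖v - t • u‖ ^ 2 = 1 - 2 * t * ⟪u, v⟫ + t ^ 2 := by
    rw [norm_sub_sq_real, real_inner_smul_right, norm_smul, hu, hv, real_inner_comm]
    simp [Real.norm_eq_abs, sq_abs]
    ring
  have hsq : ‖u - ⟪u, v⟫ • v‖ ^ 2 ≤ ‖v - t • u‖ ^ 2 := by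
    rw [h1, h2]; nlinarith [sq_nonneg (t - ⟪u, v⟫)]
  nlinarith [hsq, norm_nonneg (u - ⟪u, v⟫ • v), norm_nonneg (v - t • u)]

/-- For nonzero vectors `x`, `y` in a real Hilbert space, if `z` is the orthogonal
projection of `x/‖x‖` onto the line `ℝ y`, then `‖x/‖x‖ - z‖ ≤ ‖x - y‖ / ‖y‖`. -/
theorem stmt_0 {X : Type*} [NormedAddCommGroup X] [InnerProductSpace ℝ X] [CompleteSpace X]
    (x y : X) (hx : x ≠ 0) (hy : y ≠ 0) :
    ‖(‖x‖⁻¹ • x) - (⟪(‖x‖⁻¹ • x), (‖y‖⁻¹ • y)⟫ • (‖y‖⁻¹ • y))‖ ≤ ‖x - y‖ / ‖y‖ := by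
  have hxn : (0:ℝ) < ‖x‖ := norm_pos_iff.mpr hx
  have hyn : (0:ℝ) < ‖y‖ := norm_pos_iff.mpr hy
  have key : ‖x - y‖ / ‖y‖ = ‖(‖y‖⁻¹ • y) - (‖x‖ / ‖y‖) • (‖x‖⁻¹ • x)‖ := by
    have : (‖y‖⁻¹ • y) - (‖x‖ / ‖y‖) • (‖x‖⁻¹ • x) = ‖y‖⁻¹ • (y - x) := by
      rw [smul_sub, smul_smul]
      congr 2
      field_simp
    rw [this, norm_smul, norm_inv, norm_norm, norm_sub_rev]
    ring
  rw [key]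
  exact aux_unit _ _ (norm_smul_inv_norm hx) (norm_smul_inv_norm hy) _
end

section
/- In a real Hilbert space, for any nonzero vectors w and u, if ‖w − u‖ ≤ s‖w‖ for some s ∈ (0,1), then there exists t ∈ (0,1] such that the vector u₂ := t·⟨w,u⟩u/‖u‖² satisfies ‖w − u₂‖ = s‖w‖ and ‖u₂‖ ≤ √(1 − s²)‖w‖. -/
open RealInnerProductSpace

/-- In a real Hilbert space, for nonzero `w`, `u` with `‖w - u‖ ≤ s ‖w‖`, `s ∈ (0,1)`,
there is `t ∈ (0,1]` such that `u₂ := t • (⟪w,u⟫/‖u‖²) • u` satisfies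
`‖w - u₂‖ = s ‖w‖` and `‖u₂‖ ≤ √(1 - s²) ‖w‖`. -/
theorem stmt_1 {X : Type*} [NormedAddCommGroup X] [InnerProductSpace ℝ X] [CompleteSpace X]
    (w u : X) (hw : w ≠ 0) (hu : u ≠ 0) (s : ℝ) (hs : s ∈ Set.Ioo (0 : ℝ) 1)
    (h : ‖w - u‖ ≤ s * ‖w‖) :
    ∃ t ∈ Set.Ioc (0 : ℝ) 1,
      ‖w - t • ((⟪w, u⟫ / ‖u‖ ^ 2) • u)‖ = s * ‖w‖ ∧
      ‖t • ((⟪w, u⟫ / ‖u‖ ^ 2) • u)‖ ≤ Real.sqrt (1 - s ^ 2) * ‖w‖ := by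
  obtain ⟨hs0, hs1⟩ := hs
  have hwn : (0:ℝ) < ‖w‖ := norm_pos_iff.mpr hw
  have hun : (0:ℝ) < ‖u‖ := norm_pos_iff.mpr hu
  set c : ℝ := ⟪w, u⟫ / ‖u‖ ^ 2 with hc
  set u₁ : X := c • u with hu₁def
  have horthu : ⟪w - u₁, u⟫ = 0 := by
    rw [inner_sub_left, hu₁def, real_inner_smul_left, hc, real_inner_self_eq_norm_sq]
    field_simp
    ring
  have horth : ∀ a : ℝ, ⟪w - u₁, a • u⟫ = 0 := by
    intro a; rw [real_inner_smul_right, horthu, mul_zero]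
  have key : ∀ t : ℝ, ‖w - t • u₁‖ ^ 2 = ‖w - u₁‖ ^ 2 + (1 - t) ^ 2 * ‖u₁‖ ^ 2 := by
    intro t
    have hdec : w - t • u₁ = (w - u₁) + ((1 - t) * c) • u := by
      rw [hu₁def, smul_smul, sub_mul, one_mul]
      module
    rw [hdec, norm_add_sq_real, horth, hu₁def, norm_smul, norm_smul]
    simp only [Real.norm_eq_abs, mul_pow, sq_abs]
    ring
  have hle1 : ‖w - u₁‖ ≤ ‖w - u‖ := by
    have hdec : w - u = (w - u₁) + (c - 1) • u := by
      rw [hu₁def]; module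
    have : ‖w - u‖ ^ 2 = ‖w - u₁‖ ^ 2 + ‖(c - 1) • u‖ ^ 2 := by
      rw [hdec, norm_add_sq_real, horth]; ring
    nlinarith [norm_nonneg (w - u₁), norm_nonneg (w - u), sq_nonneg ‖(c - 1) • u‖]
  set f : ℝ → ℝ := fun t => ‖w - t • u₁‖ with hf
  have hf0 : f 0 = ‖w‖ := by simp [hf]
  have hcont : ContinuousOn f (Set.Icc (0:ℝ) 1) := by
    apply Continuous.continuousOn; fun_prop
  have hmem : s * ‖w‖ ∈ Set.Icc (f 1) (f 0) := by
    constructor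
    · show ‖w - (1:ℝ) • u₁‖ ≤ s * ‖w‖
      rw [one_smul]; exact le_trans hle1 h
    · rw [hf0]; nlinarith
  obtain ⟨t, ht01, hft⟩ := intermediate_value_Icc' (by norm_num : (0:ℝ) ≤ 1) hcont hmem
  have ht0 : 0 < t := by
    rcases lt_or_eq_of_le ht01.1 with h' | h'
    · exact h'
    · exfalso
      rw [← h'] at hft
      rw [hf0] at hft
      nlinarith
  refine ⟨t, ⟨ht0, ht01.2⟩, ?_, ?_⟩
  · exact hft
  · -- bound part
    have hft' : ‖w - t • u₁‖ = s * ‖w‖ := hft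
    have hkt := key t
    have hk0 := key 0
    rw [hft'] at hkt
    simp only [zero_smul, sub_zero] at hk0
    -- t^2 ‖u₁‖^2 ≤ (1 - s^2) ‖w‖^2
    have hb : (t * ‖u₁‖) ^ 2 ≤ (1 - s ^ 2) * ‖w‖ ^ 2 := by
      nlinarith [sq_nonneg ‖u₁‖, ht01.2, ht0]
    have hnorm : ‖t • u₁‖ = t * ‖u₁‖ := by
      rw [norm_smul, Real.norm_eq_abs, abs_of_pos ht0]
    rw [hnorm]
    have h1s : (0:ℝ) ≤ 1 - s ^ 2 := by nlinarith
    calc t * ‖u₁‖ = Real.sqrt ((t * ‖u₁‖) ^ 2) := by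
          rw [Real.sqrt_sq (by positivity)]
      _ ≤ Real.sqrt ((1 - s ^ 2) * ‖w‖ ^ 2) := Real.sqrt_le_sqrt hb
      _ = Real.sqrt (1 - s ^ 2) * ‖w‖ := by
          rw [Real.sqrt_mul h1s, Real.sqrt_sq hwn.le]
end

section
/- Let A be a closed subset of a complete metric space X, b ∉ A, a ∈ A, δ > 0 and μ > 0. Consider f := d(·, b) + indicator of A. If the strong slope |∇f|(u) ≥ μ for all u ∈ A ∩ B(a, δ) with ‖u − b‖ ≤ ‖a − b‖ (i.e. with f(u) ≤ f(a)) and μδ < d(a,b), then d(b, A) ≤ d(a, b) − μδ. -/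
open Metric Filter
open scoped Classical

/-- The strong slope `|∇f|(u) = limsup_{v → u, v ≠ u} (f u - f v)/d(v,u)` of an
extended-real-valued function on a metric space. -/
noncomputable def strongSlope {X : Type*} [MetricSpace X] (f : X → EReal) (u : X) : EReal :=
  Filter.limsup (fun v => (f u - f v) / ((dist v u : ℝ) : EReal)) (nhdsWithin u {u}ᶜ)


/-- Specialized Ekeland variational principle for `g = dist · b` on a closed set `A`. -/
lemma ekeland_dist_aux {X : Type*} [MetricSpace X] [CompleteSpace X] (A : Set X)
    (hA : IsClosed A) (a b : X) (ha : a ∈ A) (w : ℝ) (hw : 0 < w) :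
    ∃ p ∈ A, dist p b + w * dist p a ≤ dist a b ∧
      ∀ y ∈ A, y ≠ p → dist p b < dist y b + w * dist p y := by
  set g : X → ℝ := fun y => dist y b with hgdef
  have cg : Continuous g := continuous_id.dist continuous_const
  set S : X → Set X := fun x => {y ∈ A | g y + w * dist y x ≤ g x} with hSdef
  have hmemS : ∀ x ∈ A, x ∈ S x := fun x hx => ⟨hx, by simp⟩
  have hbdd : ∀ x, BddBelow (g '' S x) := by
    intro x; exact ⟨0, by rintro r ⟨y, -, rfl⟩; exact dist_nonneg⟩
  have htrans : ∀ x y z : X, y ∈ S x → z ∈ S y → z ∈ S x := by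
    rintro x y z ⟨hyA, hy⟩ ⟨hzA, hz⟩
    refine ⟨hzA, ?_⟩
    nlinarith [dist_triangle z y x]
  have step : ∀ (n : ℕ) (x : X), x ∈ A →
      ∃ y, (y ∈ S x) ∧ g y < sInf (g '' S x) + (1/2)^n := by
    intro n x hx
    obtain ⟨r, ⟨y, hy, rfl⟩, hr⟩ :=
      Real.lt_sInf_add_pos (Set.Nonempty.image g ⟨x, hmemS x hx⟩)
        (by positivity : (0:ℝ) < (1/2)^n)
    exact ⟨y, hy, hr⟩
  let F : ℕ → {x : X // x ∈ A} → {x : X // x ∈ A} := fun n x =>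
    ⟨(step n x.1 x.2).choose, (step n x.1 x.2).choose_spec.1.1⟩
  let u : ℕ → {x : X // x ∈ A} := fun n => Nat.rec ⟨a, ha⟩ F n
  set x : ℕ → X := fun n => (u n).1 with hxdef
  have hxA : ∀ n, x n ∈ A := fun n => (u n).2
  have hx0 : x 0 = a := rfl
  have hstep : ∀ n, x (n+1) ∈ S (x n) ∧ g (x (n+1)) < sInf (g '' S (x n)) + (1/2)^n :=
    fun n => (step n (x n) (hxA n)).choose_spec
  have hSmono : ∀ n m, n ≤ m → x m ∈ S (x n) := by
    intro n m hnm
    induction m, hnm using Nat.le_induction with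
    | base => exact hmemS _ (hxA n)
    | succ m hnm ih => exact htrans _ _ _ ih (hstep m).1
  have hanti : Antitone fun n => g (x n) := by
    intro n m hnm
    have h := (hSmono n m hnm).2
    nlinarith [dist_nonneg (x := x m) (y := x n)]
  have hbdd' : BddBelow (Set.range fun n => g (x n)) :=
    ⟨0, by rintro r ⟨n, rfl⟩; exact dist_nonneg⟩
  set L : ℝ := ⨅ n, g (x n) with hLdef
  have htend : Filter.Tendsto (fun n => g (x n)) atTop (nhds L) :=
    tendsto_atTop_ciInf hanti hbdd'
  have hLle : ∀ n, L ≤ g (x n) := fun n => ciInf_le hbdd' n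
  have hcauchy : CauchySeq x := by
    apply cauchySeq_of_le_tendsto_0 (fun N => (g (x N) - L) / w)
    · intro n m N hn hm
      have key : ∀ i j, N ≤ i → i ≤ j → dist (x i) (x j) ≤ (g (x N) - L) / w := by
        intro i j hi hij
        have h := (hSmono i j hij).2
        have h2 : w * dist (x j) (x i) ≤ g (x i) - g (x j) := by linarith
        have h3 : g (x i) ≤ g (x N) := hanti hi
        have h4 : L ≤ g (x j) := hLle j
        rw [dist_comm]
        rw [le_div_iff₀ hw]
        nlinarith
      rcases le_total n m with h | h
      · exact key n m hn h
      · rw [dist_comm]; exact key m n hm h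
    · have : Filter.Tendsto (fun N => (g (x N) - L) / w) atTop (nhds ((L - L) / w)) :=
        (htend.sub_const L).div_const w
      simpa using this
  obtain ⟨p, hp⟩ := cauchySeq_tendsto_of_complete hcauchy
  have hpA : p ∈ A := hA.mem_of_tendsto hp (Filter.Eventually.of_forall hxA)
  have tg : Filter.Tendsto (fun n => g (x n)) atTop (nhds (g p)) :=
    (cg.tendsto p).comp hp
  have hpS : ∀ n, p ∈ S (x n) := by
    intro n
    refine ⟨hpA, ?_⟩
    have td : Filter.Tendsto (fun m => g (x m) + w * dist (x m) (x n)) atTop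
        (nhds (g p + w * dist p (x n))) := by
      exact tg.add ((((continuous_id.dist continuous_const).tendsto p).comp hp).const_mul w)
    refine le_of_tendsto td ?_
    filter_upwards [Filter.eventually_ge_atTop n] with m hm
    exact (hSmono n m hm).2
  have hmin : ∀ y, y ∈ S p → g p ≤ g y := by
    intro y hy
    have hySn : ∀ n, y ∈ S (x n) := fun n => htrans _ _ _ (hpS n) hy
    have h1 : ∀ n, g (x (n+1)) ≤ g y + (1/2)^n := by
      intro n
      have := (hstep n).2
      have h2 : sInf (g '' S (x n)) ≤ g y := csInf_le (hbdd _) ⟨y, hySn n, rfl⟩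
      linarith
    have t1 : Filter.Tendsto (fun n => g (x (n+1))) atTop (nhds (g p)) :=
      tg.comp (tendsto_add_atTop_nat 1)
    have t2 : Filter.Tendsto (fun n : ℕ => g y + (1/2:ℝ)^n) atTop (nhds (g y)) := by
      have := tendsto_pow_atTop_nhds_zero_of_lt_one (by norm_num : (0:ℝ) ≤ 1/2)
        (by norm_num : (1/2:ℝ) < 1)
      simpa using tendsto_const_nhds.add this
    exact le_of_tendsto_of_tendsto' t1 t2 h1
  refine ⟨p, hpA, ?_, ?_⟩
  · have := (hpS 0).2
    rw [hx0] at this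
    simpa [g] using this
  · intro y hyA hyp
    by_contra hcon
    push_neg at hcon
    have hyS : y ∈ S p := ⟨hyA, by rw [dist_comm]; simpa [g] using hcon⟩
    have h1 := hmin y hyS
    have h2 := hyS.2
    have h3 : dist y p ≤ 0 := by nlinarith
    exact hyp (by simpa using dist_le_zero.1 h3)

/-- Distance decrease: let `A` be closed in a complete metric space, `b ∉ A`, `a ∈ A`,
`δ > 0`, `μ > 0` with `μ δ < d(a,b)`.  If `f := d(·,b) + ι_A` has strong slope at least `μ`
at every `u ∈ A ∩ B(a,δ)` with `d(u,b) ≤ d(a,b)`, then `d(b,A) ≤ d(a,b) - μ δ`. -/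
theorem stmt_2 {X : Type*} [MetricSpace X] [CompleteSpace X] (A : Set X) (hA : IsClosed A)
    (a b : X) (ha : a ∈ A) (hb : b ∉ A) (δ μ : ℝ) (hδ : 0 < δ) (hμ : 0 < μ)
    (hμδ : μ * δ < dist a b)
    (hslope : ∀ u ∈ A, dist u a < δ → dist u b ≤ dist a b →
      (μ : EReal) ≤ strongSlope (fun v => ((dist v b : ℝ) : EReal) + (if v ∈ A then (0 : EReal) else ⊤)) u) :
    infDist b A ≤ dist a b - μ * δ := by
  by_contra hcon
  push_neg at hcon
  set m : ℝ := infDist b A with hm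
  have hmab : m ≤ dist a b := by
    have := infDist_le_dist_of_mem (x := b) ha
    rwa [dist_comm] at this
  have h1 : dist a b - m < μ * δ := by linarith
  set ε : ℝ := (dist a b - m + μ * δ) / 2 with hε
  have hε0 : 0 < ε := by
    have : 0 ≤ dist a b - m := by linarith
    positivity
  have hεμδ : ε < μ * δ := by simp only [hε]; linarith
  have habmε : dist a b - m ≤ ε := by simp only [hε]; linarith
  set lam : ℝ := (ε / μ + δ) / 2 with hlam
  have hlam0 : 0 < lam := by positivity
  have hlamδ : lam < δ := by
    have : ε / μ < δ := (div_lt_iff₀ hμ).2 (by linarith [hεμδ])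
    simp only [hlam]; linarith
  set w : ℝ := ε / lam with hwdef
  have hw : 0 < w := by positivity
  have hwμ : w < μ := by
    rw [hwdef, div_lt_iff₀ hlam0]
    have h2 : ε / μ < lam := by
      have : ε / μ < δ := (div_lt_iff₀ hμ).2 (by linarith [hεμδ])
      simp only [hlam]; linarith
    have h3 : ε < lam * μ := (div_lt_iff₀ hμ).1 h2
    linarith [mul_comm lam μ, h3, (by ring : μ * lam = lam * μ)]
  obtain ⟨p, hpA, hp1, hp2⟩ := ekeland_dist_aux A hA a b ha w hw
  have hpm : m ≤ dist p b := by
    have := infDist_le_dist_of_mem (x := b) hpA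
    rwa [dist_comm] at this
  have hpa : dist p a ≤ lam := by
    have h2 : w * dist p a ≤ dist a b - dist p b := by linarith
    have h3 : w * dist p a ≤ ε := by linarith
    rw [hwdef] at h3
    rw [div_mul_eq_mul_div, div_le_iff₀ hlam0] at h3
    nlinarith [dist_nonneg (x := p) (y := a)]
  have hpb : dist p b ≤ dist a b := by
    nlinarith [dist_nonneg (x := p) (y := a), hp1]
  have hsl := hslope p hpA (lt_of_le_of_lt hpa hlamδ) hpb
  have hub : strongSlope (fun v => ((dist v b : ℝ) : EReal) + (if v ∈ A then (0 : EReal) else ⊤)) p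
      ≤ (w : EReal) := by
    unfold strongSlope
    refine Filter.limsup_le_of_le (by isBoundedDefault) ?_
    filter_upwards [self_mem_nhdsWithin] with v hv
    have hvp : v ≠ p := hv
    have hd : (0:ℝ) < dist v p := dist_pos.2 hvp
    by_cases hvA : v ∈ A
    · simp only [if_pos hpA, if_pos hvA, add_zero]
      rw [← EReal.coe_sub, ← EReal.coe_div, EReal.coe_le_coe_iff]
      rw [div_le_iff₀ hd]
      have := hp2 v hvA hvp
      rw [dist_comm p v] at this
      linarith
    · simp only [if_pos hpA, if_neg hvA, add_zero]
      have h1 : ((dist v b : ℝ) : EReal) + ⊤ = ⊤ :=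
        EReal.add_top_of_ne_bot (EReal.coe_ne_bot _)
      rw [h1, EReal.sub_top]
      rw [EReal.bot_div_of_pos_ne_top (by exact_mod_cast hd) (EReal.coe_ne_top _)]
      exact bot_le
  have : (μ : EReal) ≤ (w : EReal) := le_trans hsl hub
  rw [EReal.coe_le_coe_iff] at this
  linarith
end

section
/- Let f : X → ℝ ∪ {+∞} be lower semicontinuous on a complete metric space X, x ∈ X with f(x) < +∞, δ > 0, α < f(x). If μ := inf { |∇f|(u) : u ∈ B(x,δ), α < f(u) ≤ f(x) } satisfies μ > (f(x) − α)/δ, then the sublevel set S(f,α) := {u : f(u) ≤ α} is nonempty and μ · d(x, S(f,α)) ≤ f(x) − α. -/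
open Metric Filter

lemma ekeland_aux {X : Type*} [MetricSpace X] [CompleteSpace X]
    (h : X → ℝ) (hlsc : LowerSemicontinuous h) (c : ℝ) (hc : ∀ v, c ≤ h v)
    (σ : ℝ) (hσ : 0 < σ) (x : X) :
    ∃ y, h y + σ * dist x y ≤ h x ∧ ∀ v, h y ≤ h v + σ * dist v y := by
  set F : X → Set X := fun u => {v | h v + σ * dist u v ≤ h u} with hF
  have selfmem : ∀ u, u ∈ F u := by intro u; simp [hF]
  have Ftrans : ∀ {u v w : X}, v ∈ F u → w ∈ F v → w ∈ F u := by
    intro u v w h1 h2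
    simp only [hF, Set.mem_setOf_eq] at *
    have htri := dist_triangle u v w
    nlinarith
  have Fbdd : ∀ u, BddBelow (h '' F u) := fun u => ⟨c, by rintro a ⟨v, -, rfl⟩; exact hc v⟩
  have Fne : ∀ u, (h '' F u).Nonempty := fun u => ⟨h u, u, selfmem u, rfl⟩
  have Fclosed : ∀ u, IsClosed (F u) := by
    intro u
    have glsc : LowerSemicontinuous (fun v => h v + σ * dist u v) :=
      hlsc.add (((continuous_const.mul (continuous_const.dist continuous_id))).lowerSemicontinuous)
    have := (lowerSemicontinuous_iff_isOpen_preimage.1 glsc) (h u)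
    have : IsClosed ((fun v => h v + σ * dist u v) ⁻¹' Set.Ioi (h u))ᶜ := this.isClosed_compl
    convert this using 1
    ext v; simp [hF, not_lt]
  have step : ∀ (u : X) (n : ℕ), ∃ v, v ∈ F u ∧ h v ≤ sInf (h '' F u) + (1/2 : ℝ)^n := by
    intro u n
    have hlt : sInf (h '' F u) < sInf (h '' F u) + (1/2 : ℝ)^n := by
      have : (0:ℝ) < (1/2:ℝ)^n := by positivity
      linarith
    obtain ⟨a, ⟨v, hv, rfl⟩, ha⟩ := exists_lt_of_csInf_lt (Fne u) hlt
    exact ⟨v, hv, ha.le⟩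
  set seq : ℕ → X := fun n => Nat.rec x (fun n u => (step u n).choose) n with hseq'
  have seq0 : seq 0 = x := rfl
  have hseq : ∀ n, seq (n+1) ∈ F (seq n) ∧
      h (seq (n+1)) ≤ sInf (h '' F (seq n)) + (1/2 : ℝ)^n :=
    fun n => (step (seq n) n).choose_spec
  have chain : ∀ n m, n ≤ m → seq m ∈ F (seq n) := by
    intro n m hnm
    induction m, hnm using Nat.le_induction with
    | base => exact selfmem _
    | succ m hm ih => exact Ftrans ih (hseq m).1
  have diam : ∀ n, ∀ w ∈ F (seq (n+1)), σ * dist (seq (n+1)) w ≤ (1/2 : ℝ)^n := by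
    intro n w hw
    have h1 : w ∈ F (seq n) := Ftrans (hseq n).1 hw
    have h2 : sInf (h '' F (seq n)) ≤ h w := csInf_le (Fbdd _) ⟨w, h1, rfl⟩
    have h3 := (hseq n).2
    have h4 : h w + σ * dist (seq (n+1)) w ≤ h (seq (n+1)) := hw
    linarith
  have cauchy : CauchySeq seq := by
    apply cauchySeq_of_le_geometric (1/2 : ℝ) (max ((h x - c)/σ) (2/σ)) (by norm_num)
    intro n
    match n with
    | 0 =>
      have h1 : h (seq 1) + σ * dist (seq 0) (seq 1) ≤ h (seq 0) := (hseq 0).1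
      have h2 : c ≤ h (seq 1) := hc _
      have : dist (seq 0) (seq 1) ≤ (h x - c)/σ := by
        rw [le_div_iff₀ hσ, mul_comm]; rw [seq0] at h1 ⊢; linarith
      calc dist (seq 0) (seq 1) ≤ (h x - c)/σ := this
        _ ≤ max ((h x - c)/σ) (2/σ) := le_max_left _ _
        _ = max ((h x - c)/σ) (2/σ) * (1/2)^0 := by ring
    | (m+1) =>
      have := diam m (seq (m+2)) (chain (m+1) (m+2) (by omega))
      have hd : dist (seq (m+1)) (seq (m+2)) ≤ (1/2)^m / σ := by
        rw [le_div_iff₀ hσ, mul_comm]; exact this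
      calc dist (seq (m+1)) (seq (m+2)) ≤ (1/2)^m / σ := hd
        _ = (2/σ) * (1/2)^(m+1) := by ring
        _ ≤ max ((h x - c)/σ) (2/σ) * (1/2)^(m+1) := by
            apply mul_le_mul_of_nonneg_right (le_max_right _ _) (by positivity)
  obtain ⟨y, hy⟩ := cauchySeq_tendsto_of_complete cauchy
  have ymem : ∀ n, y ∈ F (seq n) := by
    intro n
    apply (Fclosed (seq n)).mem_of_tendsto hy
    filter_upwards [eventually_ge_atTop n] with m hm
    exact chain n m hm
  have yuniq : ∀ v ∈ F y, v = y := by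
    intro v hv
    by_contra hne
    have hdpos : 0 < dist y v := dist_pos.2 (Ne.symm hne)
    obtain ⟨n, hn⟩ := exists_pow_lt_of_lt_one (show (0:ℝ) < σ * dist y v / 2 by positivity)
      (show (1/2 : ℝ) < 1 by norm_num)
    have h1 := diam n v (Ftrans (ymem (n+1)) hv)
    have h2 := diam n y (ymem (n+1))
    have htri := dist_triangle y (seq (n+1)) v
    have := dist_comm (seq (n+1)) y
    nlinarith
  refine ⟨y, ?_, ?_⟩
  · have := ymem 0; rw [seq0] at this; exact this
  · intro v
    by_cases hv : v ∈ F y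
    · have : v = y := yuniq v hv
      subst this; simp [mul_nonneg hσ.le dist_nonneg]
    · simp only [hF, Set.mem_setOf_eq, not_le] at hv
      rw [dist_comm]; linarith

lemma ereal_coe_div (p q : ℝ) : ((p / q : ℝ) : EReal) = (p : EReal) / (q : EReal) := by
  rw [div_eq_mul_inv, EReal.coe_mul, EReal.coe_inv, div_eq_mul_inv]

/-- Error bound (Basic Lemma): if `f` is lower semicontinuous on a complete metric space,
`f x < +∞`, `α < f x`, and `μ := inf { |∇f|(u) : u ∈ B(x,δ), α < f u ≤ f x }` satisfies
`μ > (f x - α)/δ`, then the sublevel set `S(f,α)` is nonempty and `μ d(x, S(f,α)) ≤ f x - α`. -/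
theorem stmt_3 {X : Type*} [MetricSpace X] [CompleteSpace X] (f : X → EReal)
    (hf : LowerSemicontinuous f) (x : X) (hx : f x < ⊤) (δ : ℝ) (hδ : 0 < δ) (α : ℝ)
    (hα : (α : EReal) < f x)
    (μ : EReal)
    (hμ : μ = sInf (strongSlope f '' {u | u ∈ ball x δ ∧ (α : EReal) < f u ∧ f u ≤ f x}))
    (hgap : (f x - (α : EReal)) / (δ : EReal) < μ) :
    {u | f u ≤ (α : EReal)}.Nonempty ∧
      μ * ((infDist x {u | f u ≤ (α : EReal)} : ℝ) : EReal) ≤ f x - (α : EReal) := by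
  set S := {u | f u ≤ (α : EReal)} with hS
  have hfx_ne_top : f x ≠ ⊤ := hx.ne
  have hfx_ne_bot : f x ≠ ⊥ := ((EReal.bot_lt_coe α).trans hα).ne'
  set r := (f x).toReal with hrdef
  have hr : (r : EReal) = f x := EReal.coe_toReal hfx_ne_top hfx_ne_bot
  have hαr : α < r := by rw [← hr] at hα; exact_mod_cast hα
  set g : X → EReal := fun v => min (max (f v) (α : EReal)) (((r + 1 : ℝ)) : EReal) with hgdef
  have hαg : ∀ v, (α : EReal) ≤ g v := fun v =>
    le_min (le_max_right _ _) (by exact_mod_cast (by linarith : α ≤ r + 1))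
  have hg_ne_top : ∀ v, g v ≠ ⊤ :=
    fun v => ((min_le_right _ _).trans_lt (EReal.coe_lt_top _)).ne
  have hg_ne_bot : ∀ v, g v ≠ ⊥ := fun v => ((EReal.bot_lt_coe α).trans_le (hαg v)).ne'
  set h : X → ℝ := fun v => (g v).toReal with hhdef
  have hgh : ∀ v, ((h v : ℝ) : EReal) = g v := fun v =>
    EReal.coe_toReal (hg_ne_top v) (hg_ne_bot v)
  have hbound : ∀ v, α ≤ h v := by
    intro v
    have := EReal.toReal_le_toReal (hαg v) (EReal.coe_ne_bot α) (hg_ne_top v)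
    simpa using this
  have hlsc : LowerSemicontinuous h := by
    rw [lowerSemicontinuous_iff_isOpen_preimage]
    intro b
    have : h ⁻¹' Set.Ioi b =
        ({v | (b : EReal) < f v} ∪ {v | (b : EReal) < (α : EReal)}) ∩
          {v : X | (b : EReal) < ((r + 1 : ℝ) : EReal)} := by
      ext v
      simp only [Set.mem_preimage, Set.mem_Ioi, Set.mem_inter_iff, Set.mem_union,
        Set.mem_setOf_eq]
      rw [← EReal.coe_lt_coe_iff, hgh v, hgdef]
      simp [lt_min_iff, lt_max_iff]
    rw [this]
    apply IsOpen.inter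
    · apply IsOpen.union
      · exact lowerSemicontinuous_iff_isOpen_preimage.1 hf b
      · by_cases hb : (b : EReal) < (α : EReal) <;> simp [hb]
    · by_cases hb : (b : EReal) < ((r + 1 : ℝ) : EReal) <;> simp [hb]
  have hgx : g x = f x := by
    rw [hgdef]
    simp only []
    rw [max_eq_left hα.le, min_eq_left (by rw [← hr]; exact_mod_cast (by linarith : r ≤ r + 1))]
  have hhx : h x = r := by rw [hhdef]; simp only []; rw [hgx, hrdef]
  -- key lemma
  have key : ∀ σ : ℝ, (r - α) / δ < σ → (σ : EReal) < μ →
      ∃ y ∈ S, dist x y ≤ (r - α) / σ := by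
    intro σ hσ1 hσ2
    have hσpos : 0 < σ := (div_pos (by linarith) hδ).trans hσ1
    obtain ⟨y, hy1, hy2⟩ := ekeland_aux h hlsc α hbound σ hσpos x
    rw [hhx] at hy1
    have hdxy0 : 0 ≤ dist x y := dist_nonneg
    have hyα : α ≤ h y := hbound y
    have hdy : dist x y ≤ (r - α) / σ := by
      rw [le_div_iff₀ hσpos, mul_comm]; linarith
    by_cases hcase : f y ≤ (α : EReal)
    · exact ⟨y, hcase, hdy⟩
    · exfalso
      push_neg at hcase
      have hyr : h y ≤ r := by nlinarith
      have hyball : y ∈ ball x δ := by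
        rw [mem_ball, dist_comm]
        have hlt : (r - α) / σ < δ := by
          rw [div_lt_iff₀ hσpos]
          rw [div_lt_iff₀ hδ] at hσ1
          linarith
        linarith
      have hgy : g y = min (f y) (((r + 1 : ℝ)) : EReal) := by
        rw [hgdef]; simp only []; rw [max_eq_left hcase.le]
      have hfy_le_r1 : f y ≤ ((r + 1 : ℝ) : EReal) := by
        by_contra hcon
        push_neg at hcon
        have : g y = ((r + 1 : ℝ) : EReal) := by rw [hgy, min_eq_right hcon.le]
        have h2 : ((h y : ℝ) : EReal) = ((r + 1 : ℝ) : EReal) := by rw [hgh y, this]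
        have : h y = r + 1 := by exact_mod_cast h2
        linarith
      have hfy_eq : f y = ((h y : ℝ) : EReal) := by
        rw [hgh y, hgy, min_eq_left hfy_le_r1]
      have hfy_le : f y ≤ f x := by
        rw [hfy_eq, ← hr]; exact_mod_cast hyr
      have hmem : y ∈ {u | u ∈ ball x δ ∧ (α : EReal) < f u ∧ f u ≤ f x} :=
        ⟨hyball, hcase, hfy_le⟩
      have hμle : μ ≤ strongSlope f y := by
        rw [hμ]; exact sInf_le (Set.mem_image_of_mem _ hmem)
      have hslope : strongSlope f y ≤ (σ : EReal) := by
        refine Filter.limsup_le_of_le (by isBoundedDefault) ?_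
        filter_upwards [mem_nhdsWithin_of_mem_nhds (hf y (α : EReal) hcase),
          self_mem_nhdsWithin] with v hv hvne
        have hvney : v ≠ y := hvne
        have hd : (0 : ℝ) < dist v y := dist_pos.2 hvney
        rw [EReal.div_le_iff_le_mul (by exact_mod_cast hd) (EReal.coe_ne_top _)]
        by_cases htop : f v = ⊤
        · rw [htop, EReal.sub_top]; exact bot_le
        · have hvbot : f v ≠ ⊥ := ((EReal.bot_lt_coe α).trans hv).ne'
          set t := (f v).toReal with htdef
          have hfv : f v = ((t : ℝ) : EReal) := (EReal.coe_toReal htop hvbot).symm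
          rw [hfv] at hv
          have hαt : α < t := by exact_mod_cast hv
          have hgv : g v = min ((t : ℝ) : EReal) (((r + 1 : ℝ)) : EReal) := by
            rw [hgdef]; simp only []; rw [hfv, max_eq_left hv.le]
          have hhv : h v ≤ t := by
            have hle : g v ≤ ((t : ℝ) : EReal) := by rw [hgv]; exact min_le_left _ _
            have := EReal.toReal_le_toReal hle (hg_ne_bot v) (EReal.coe_ne_top t)
            simpa using this
          have h2 := hy2 v
          rw [hfy_eq, hfv, ← EReal.coe_sub, ← EReal.coe_mul, EReal.coe_le_coe_iff]
          nlinarith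
      exact absurd (hμle.trans hslope) (not_le.2 hσ2)
  -- gap in coerced form
  have hgap' : (((r - α) / δ : ℝ) : EReal) < μ := by
    rw [ereal_coe_div, EReal.coe_sub, hr]; exact hgap
  -- nonemptiness
  obtain ⟨z, hz1, hz2⟩ := exists_between hgap'
  have hz_ne_top : z ≠ ⊤ := (hz2.trans_le le_top).ne
  have hz_ne_bot : z ≠ ⊥ := ((EReal.bot_lt_coe _).trans hz1).ne'
  set σ0 := z.toReal with hσ0def
  have hσ0 : (σ0 : EReal) = z := EReal.coe_toReal hz_ne_top hz_ne_bot
  have hσ0a : (r - α) / δ < σ0 := by rw [← EReal.coe_lt_coe_iff, hσ0]; exact hz1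
  obtain ⟨y0, hy0S, hy0d⟩ := key σ0 hσ0a (hσ0 ▸ hz2)
  refine ⟨⟨y0, hy0S⟩, ?_⟩
  -- main inequality
  have hfxα : f x - (α : EReal) = ((r - α : ℝ) : EReal) := by rw [EReal.coe_sub, hr]
  rw [hfxα]
  set D := infDist x S with hDdef
  have hD0 : 0 ≤ D := infDist_nonneg
  rcases hD0.eq_or_lt with hD | hD
  · rw [← hD]
    simp only [EReal.coe_zero, mul_zero]
    exact_mod_cast (by linarith : (0 : ℝ) ≤ r - α)
  · by_contra hcon
    push_neg at hcon
    have hDle : ∀ σ : ℝ, (r - α) / δ < σ → (σ : EReal) < μ → σ * D ≤ r - α := by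
      intro σ h1 h2
      obtain ⟨y, hyS, hyd⟩ := key σ h1 h2
      have hσpos : 0 < σ := (div_pos (by linarith) hδ).trans h1
      have : D ≤ (r - α) / σ := (infDist_le_dist_of_mem hyS).trans hyd
      rw [le_div_iff₀ hσpos] at this
      linarith [this]
    induction μ with
    | bot => exact absurd hgap' (by simp)
    | top =>
      set σ := max ((r - α) / δ) ((r - α) / D) + 1 with hσdef
      have h1 : (r - α) / δ < σ := lt_of_le_of_lt (le_max_left _ _) (by rw [hσdef]; linarith)
      have h2 : (σ : EReal) < ⊤ := EReal.coe_lt_top _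
      have h3 := hDle σ h1 h2
      have h4 : (r - α) / D < σ := lt_of_le_of_lt (le_max_right _ _) (by rw [hσdef]; linarith)
      rw [div_lt_iff₀ hD] at h4
      linarith
    | coe m =>
      have hcon' : r - α < m * D := by
        rw [← EReal.coe_mul] at hcon
        exact_mod_cast hcon
      have hm1 : (r - α) / δ < m := by exact_mod_cast hgap'
      have hm2 : (r - α) / D < m := by rw [div_lt_iff₀ hD]; linarith
      obtain ⟨σ, hσa, hσb⟩ := exists_between (max_lt hm1 hm2)
      have h1 : (r - α) / δ < σ := lt_of_le_of_lt (le_max_left _ _) hσa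
      have h3 := hDle σ h1 (by exact_mod_cast hσb)
      have h4 : (r - α) / D < σ := lt_of_le_of_lt (le_max_right _ _) hσa
      rw [div_lt_iff₀ hD] at h4
      linarith
end

section
/- Let A, B be closed subsets of a Euclidean space and x̄ ∈ A ∩ B. If {A,B} is BLPW-restrictedly regular at x̄ (i.e., there exist α < 1 and δ > 0 such that −⟨u,v⟩ < α for all a ∈ A ∩ B(x̄,δ), b ∈ B ∩ B(x̄,δ), u ∈ N_A^{B-prox}(a) with ‖u‖ = 1, v ∈ N_B^{A-prox}(b) with ‖v‖ = 1), then {A,B} is BLPW-DIL-restrictedly regular at x̄: there exist α' < 1 and δ' > 0 with −⟨a − b_a, b − a_b⟩ < α'‖a − b_a‖‖b − a_b‖ for all a ∈ (A\B) ∩ B(x̄,δ'), b ∈ (B\A) ∩ B(x̄,δ'), b_a ∈ P_B(a), a_b ∈ P_A(b). -/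
open Metric RealInnerProductSpace

variable {X : Type*} [NormedAddCommGroup X] [InnerProductSpace ℝ X]

/-- The Fréchet normal cone to `A` at `a`:
`{u | limsup_{x → a, x ∈ A} ⟪u, x - a⟫/‖x - a‖ ≤ 0}`, in ε-δ form. -/
def frechetNormalCone (A : Set X) (a : X) : Set X :=
  {u | ∀ ε > 0, ∃ δ > 0, ∀ x ∈ A, ‖x - a‖ < δ → ⟪u, x - a⟫ ≤ ε * ‖x - a‖}

/-- The metric projection of `x` on `A`. -/
noncomputable def projSet (A : Set X) (x : X) : Set X :=
  {a ∈ A | ‖x - a‖ = infDist x A}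

/-- `cone S`: the set of nonnegative multiples of elements of `S`. -/
def nnCone (S : Set X) : Set X := {u | ∃ l : ℝ, 0 ≤ l ∧ ∃ s ∈ S, u = l • s}

/-- The `B`-proximal normal cone to `A` at `a`: `cone((P_A⁻¹(a) ∩ B) - a)`. -/
noncomputable def bProxNormalCone (A B : Set X) (a : X) : Set X :=
  nnCone ((fun x => x - a) '' ({x | a ∈ projSet A x} ∩ B))

/-- BLPW-restricted regularity implies BLPW-DIL-restricted regularity. -/
theorem stmt_7 [FiniteDimensional ℝ X] (A B : Set X) (hA : IsClosed A) (hB : IsClosed B)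
    (xb : X) (hxb : xb ∈ A ∩ B)
    (hreg : ∃ α < (1 : ℝ), ∃ δ > (0 : ℝ),
      ∀ a ∈ A ∩ ball xb δ, ∀ b ∈ B ∩ ball xb δ,
        ∀ u ∈ bProxNormalCone A B a, ‖u‖ = 1 →
        ∀ v ∈ bProxNormalCone B A b, ‖v‖ = 1 → -⟪u, v⟫ < α) :
    ∃ α' < (1 : ℝ), ∃ δ' > (0 : ℝ),
      ∀ a ∈ (A \ B) ∩ ball xb δ', ∀ b ∈ (B \ A) ∩ ball xb δ',
        ∀ ba ∈ projSet B a, ∀ ab ∈ projSet A b,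
          -⟪a - ba, b - ab⟫ < α' * ‖a - ba‖ * ‖b - ab‖ := by
  obtain ⟨α, hα1, δ, hδ, hreg⟩ := hreg
  refine ⟨max α (1/2), max_lt hα1 (by norm_num), δ/2, by linarith, ?_⟩
  rintro a ⟨⟨haA, haB⟩, haball⟩ b ⟨⟨hbB, hbA⟩, hbball⟩ ba ⟨hbaB, hbad⟩ ab ⟨habA, habd⟩
  have hxbA : xb ∈ A := hxb.1
  have hxbB : xb ∈ B := hxb.2
  have hna : a - ba ≠ 0 := sub_ne_zero.mpr (fun h => haB (h ▸ hbaB))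
  have hnb : b - ab ≠ 0 := sub_ne_zero.mpr (fun h => hbA (h ▸ habA))
  have hpa : (0:ℝ) < ‖a - ba‖ := norm_pos_iff.mpr hna
  have hpb : (0:ℝ) < ‖b - ab‖ := norm_pos_iff.mpr hnb
  have h1 : ‖a - ba‖ ≤ dist a xb := by
    rw [hbad]; exact Metric.infDist_le_dist_of_mem hxbB
  have h2 : ‖b - ab‖ ≤ dist b xb := by
    rw [habd]; exact Metric.infDist_le_dist_of_mem hxbA
  have haball' : dist a xb < δ/2 := mem_ball.mp haball
  have hbball' : dist b xb < δ/2 := mem_ball.mp hbball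
  have hba_ball : ba ∈ ball xb δ := by
    rw [mem_ball]
    calc dist ba xb ≤ dist ba a + dist a xb := dist_triangle _ _ _
    _ = ‖a - ba‖ + dist a xb := by rw [dist_comm, dist_eq_norm]
    _ < δ := by linarith
  have hab_ball : ab ∈ ball xb δ := by
    rw [mem_ball]
    calc dist ab xb ≤ dist ab b + dist b xb := dist_triangle _ _ _
    _ = ‖b - ab‖ + dist b xb := by rw [dist_comm, dist_eq_norm]
    _ < δ := by linarith
  set u : X := ‖b - ab‖⁻¹ • (b - ab) with hu
  set v : X := ‖a - ba‖⁻¹ • (a - ba) with hv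
  have hu_mem : u ∈ bProxNormalCone A B ab :=
    ⟨‖b - ab‖⁻¹, by positivity, b - ab, ⟨b, ⟨⟨habA, habd⟩, hbB⟩, rfl⟩, rfl⟩
  have hv_mem : v ∈ bProxNormalCone B A ba :=
    ⟨‖a - ba‖⁻¹, by positivity, a - ba, ⟨a, ⟨⟨hbaB, hbad⟩, haA⟩, rfl⟩, rfl⟩
  have hu_norm : ‖u‖ = 1 := by
    rw [hu, norm_smul, norm_inv, norm_norm, inv_mul_cancel₀ (ne_of_gt hpb)]
  have hv_norm : ‖v‖ = 1 := by
    rw [hv, norm_smul, norm_inv, norm_norm, inv_mul_cancel₀ (ne_of_gt hpa)]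
  have key := hreg ab ⟨habA, hab_ball⟩ ba ⟨hbaB, hba_ball⟩ u hu_mem hu_norm v hv_mem hv_norm
  have hinner : ⟪u, v⟫ = ‖b - ab‖⁻¹ * (‖a - ba‖⁻¹ * ⟪b - ab, a - ba⟫) := by
    rw [hu, hv, real_inner_smul_left, real_inner_smul_right]
  have hcomm : ⟪a - ba, b - ab⟫ = ⟪b - ab, a - ba⟫ := real_inner_comm _ _
  rw [hinner] at key
  have hαle : α ≤ max α (1/2) := le_max_left _ _
  have h3 : -⟪b - ab, a - ba⟫ < α * ‖a - ba‖ * ‖b - ab‖ := by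
    have h4 : ‖b - ab‖ * ‖a - ba‖ * -(‖b - ab‖⁻¹ * (‖a - ba‖⁻¹ * ⟪b - ab, a - ba⟫))
        = -⟪b - ab, a - ba⟫ := by
      field_simp
    linarith [mul_lt_mul_of_pos_left key (mul_pos hpb hpa), h4]
  rw [hcomm]
  calc -⟪b - ab, a - ba⟫ < α * ‖a - ba‖ * ‖b - ab‖ := h3
  _ ≤ max α (1/2) * ‖a - ba‖ * ‖b - ab‖ := by
    apply mul_le_mul_of_nonneg_right _ (le_of_lt hpb)
    exact mul_le_mul_of_nonneg_right hαle (le_of_lt hpa)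
end

section
/- Let A, B be closed subsets of a Euclidean space and x̄ ∈ A ∩ B. If {A,B} is BLPW-DIL-restrictedly regular at x̄ (there exist α < 1, δ > 0 with −⟨a − b_a, b − a_b⟩ < α‖a − b_a‖‖b − a_b‖ for all a ∈ (A\B) ∩ B(x̄,δ), b ∈ (B\A) ∩ B(x̄,δ), b_a ∈ P_B(a), a_b ∈ P_A(b)), then {A,B} is NR-restrictedly regular at x̄: there exist α' < 1, δ' > 0 with ⟨a₁ − b, a₂ − b⟩ ≤ α'‖a₁ − b‖‖a₂ − b‖ for all a₁ ∈ A ∩ B(x̄,δ'), b ∈ P_B(a₁) ∩ B(x̄,δ'), a₂ ∈ P_A(b) ∩ B(x̄,δ') with a₁ ≠ b and a₂ ≠ b. -/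
open Metric RealInnerProductSpace

variable {X : Type*} [NormedAddCommGroup X] [InnerProductSpace ℝ X]

/-- BLPW-DIL-restricted regularity implies NR-restricted regularity. -/
theorem stmt_8 [FiniteDimensional ℝ X] (A B : Set X) (hA : IsClosed A) (hB : IsClosed B)
    (xb : X) (hxb : xb ∈ A ∩ B)
    (hreg : ∃ α < (1 : ℝ), ∃ δ > (0 : ℝ),
      ∀ a ∈ (A \ B) ∩ ball xb δ, ∀ b ∈ (B \ A) ∩ ball xb δ,
        ∀ ba ∈ projSet B a, ∀ ab ∈ projSet A b,
          -⟪a - ba, b - ab⟫ < α * ‖a - ba‖ * ‖b - ab‖) :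
    ∃ α' < (1 : ℝ), ∃ δ' > (0 : ℝ),
      ∀ a₁ ∈ A ∩ ball xb δ', ∀ b ∈ projSet B a₁ ∩ ball xb δ',
        ∀ a₂ ∈ projSet A b ∩ ball xb δ', a₁ ≠ b → a₂ ≠ b →
          ⟪a₁ - b, a₂ - b⟫ ≤ α' * ‖a₁ - b‖ * ‖a₂ - b‖ := by
  obtain ⟨α, hα, δ, hδ, hr⟩ := hreg
  refine ⟨α, hα, δ, hδ, ?_⟩
  rintro a₁ ⟨ha₁A, ha₁b⟩ b ⟨⟨hbB, hbinf⟩, hbball⟩ a₂ ⟨⟨ha₂A, ha₂inf⟩, _⟩ hne1 hne2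
  have ha₁nB : a₁ ∉ B := by
    intro h
    apply hne1
    have h0 : ‖a₁ - b‖ = 0 := by rw [hbinf, infDist_zero_of_mem h]
    rwa [norm_eq_zero, sub_eq_zero] at h0
  have hbnA : b ∉ A := by
    intro h
    apply hne2.symm
    have h0 : ‖b - a₂‖ = 0 := by rw [ha₂inf, infDist_zero_of_mem h]
    rwa [norm_eq_zero, sub_eq_zero] at h0
  have key := hr a₁ ⟨⟨ha₁A, ha₁nB⟩, ha₁b⟩ b ⟨⟨hbB, hbnA⟩, hbball⟩ b ⟨hbB, hbinf⟩ a₂ ⟨ha₂A, ha₂inf⟩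
  have h1 : -⟪a₁ - b, b - a₂⟫ = ⟪a₁ - b, a₂ - b⟫ := by
    rw [(neg_sub a₂ b).symm, inner_neg_right, neg_neg]
  have h2 : ‖b - a₂‖ = ‖a₂ - b‖ := norm_sub_rev _ _
  rw [h1, h2] at key
  exact key.le
end

section
/- Let N be a nonempty closed cone in a real Hilbert space and w a unit vector such that sup{⟨w, u⟩ : u ∈ N, ‖u‖ = 1} = s ≥ 0. Then d(w, N) = √(1 − s²). -/
open Metric RealInnerProductSpace

/-- Distance from a unit vector to a nonempty closed cone: if
`s = sup {⟪w,u⟫ : u ∈ N, ‖u‖ = 1} ≥ 0`, then `d(w, N) = √(1 - s²)`. -/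
theorem stmt_12 {X : Type*} [NormedAddCommGroup X] [InnerProductSpace ℝ X] [CompleteSpace X]
    (N : Set X) (hN : IsClosed N) (hNne : N.Nonempty) (h0 : (0 : X) ∈ N)
    (hcone : ∀ u ∈ N, ∀ l : ℝ, 0 ≤ l → l • u ∈ N)
    (w : X) (hw : ‖w‖ = 1) (s : ℝ)
    (hs : s = sSup {t | ∃ u ∈ N, ‖u‖ = 1 ∧ t = ⟪w, u⟫}) (hs0 : 0 ≤ s) :
    infDist w N = Real.sqrt (1 - s ^ 2) := by
  set S := {t | ∃ u ∈ N, ‖u‖ = 1 ∧ t = ⟪w, u⟫} with hS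
  have hbdd : BddAbove S := by
    refine ⟨1, fun t ht => ?_⟩
    obtain ⟨u, hu, hu1, rfl⟩ := ht
    calc ⟪w, u⟫ ≤ ‖w‖ * ‖u‖ := real_inner_le_norm w u
    _ = 1 := by rw [hw, hu1]; ring
  set D := infDist w N with hD
  have hD0 : 0 ≤ D := infDist_nonneg
  have hD1 : D ≤ 1 := by
    have := infDist_le_dist_of_mem (x := w) h0
    simpa [dist_eq_norm, hw] using this
  have key_lb : ∀ v ∈ N, Real.sqrt (1 - s ^ 2) ≤ dist w v := by
    intro v hv
    rw [dist_eq_norm]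
    have hnn : 0 ≤ ‖w - v‖ := norm_nonneg _
    have hsq : 1 - s ^ 2 ≤ ‖w - v‖ ^ 2 := by
      have hexp : ‖w - v‖ ^ 2 = 1 - 2 * ⟪w, v⟫ + ‖v‖ ^ 2 := by
        rw [@norm_sub_sq_real, hw]; ring
      rcases eq_or_ne v 0 with rfl | hv0
      · simp only [inner_zero_right, norm_zero] at hexp
        nlinarith
      · have hvn : (0 : ℝ) < ‖v‖ := norm_pos_iff.mpr hv0
        have huN : ‖v‖⁻¹ • v ∈ N := hcone v hv _ (by positivity)
        have hu1 : ‖‖v‖⁻¹ • v‖ = 1 := by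
          rw [norm_smul, norm_inv, norm_norm]; field_simp
        have htS : ⟪w, ‖v‖⁻¹ • v⟫ ∈ S := ⟨_, huN, hu1, rfl⟩
        have hts : ⟪w, ‖v‖⁻¹ • v⟫ ≤ s := hs ▸ le_csSup hbdd htS
        have hwv : ⟪w, v⟫ = ‖v‖ * ⟪w, ‖v‖⁻¹ • v⟫ := by
          rw [real_inner_smul_right]; field_simp
        rcases le_or_gt (⟪w, ‖v‖⁻¹ • v⟫) 0 with h | h
        · nlinarith
        · nlinarith [sq_nonneg (‖v‖ - ⟪w, ‖v‖⁻¹ • v⟫),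
            mul_nonneg (sub_nonneg.mpr hts) (le_of_lt (by linarith : (0:ℝ) < s + ⟪w, ‖v‖⁻¹ • v⟫))]
    calc Real.sqrt (1 - s ^ 2) ≤ Real.sqrt (‖w - v‖ ^ 2) := Real.sqrt_le_sqrt hsq
    _ = ‖w - v‖ := Real.sqrt_sq hnn
  have lb : Real.sqrt (1 - s ^ 2) ≤ D := by
    rw [hD, infDist_eq_iInf]
    have : Nonempty N := hNne.to_subtype
    exact le_ciInf fun y => key_lb y y.2
  have hDsq : D ^ 2 ≤ 1 - s ^ 2 := by
    have hst : s ≤ Real.sqrt (1 - D ^ 2) := by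
      rcases Set.eq_empty_or_nonempty S with hSe | hSne
      · have : s = 0 := by rw [hs, hSe, Real.sSup_empty]
        rw [this]; exact Real.sqrt_nonneg _
      · rw [hs]
        refine csSup_le hSne fun t ht => ?_
        obtain ⟨u, hu, hu1, rfl⟩ := ht
        rcases le_or_gt (⟪w, u⟫) 0 with h | h
        · exact h.trans (Real.sqrt_nonneg _)
        · have hvN : ⟪w, u⟫ • u ∈ N := hcone u hu _ h.le
          have hd : D ≤ ‖w - ⟪w, u⟫ • u‖ := by
            have := infDist_le_dist_of_mem (x := w) hvN
            simpa [dist_eq_norm] using this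
          have hexp : ‖w - ⟪w, u⟫ • u‖ ^ 2 = 1 - ⟪w, u⟫ ^ 2 := by
            rw [@norm_sub_sq_real, real_inner_smul_right, norm_smul, hw, hu1,
              Real.norm_eq_abs, abs_of_pos h]; ring
          have h2 : D ^ 2 ≤ 1 - ⟪w, u⟫ ^ 2 := by
            nlinarith [norm_nonneg (w - ⟪w, u⟫ • u)]
          rw [Real.le_sqrt h.le (by nlinarith)]
          nlinarith
    have h1D : (0 : ℝ) ≤ 1 - D ^ 2 := by nlinarith
    have := (Real.le_sqrt hs0 h1D).mp hst
    linarith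
  have ub : D ≤ Real.sqrt (1 - s ^ 2) := by
    rw [Real.le_sqrt hD0 (by nlinarith)]
    exact hDsq
  exact le_antisymm ub lb
end

section
/- If {x_n} is a sequence in a complete metric space satisfying d(x_{n+1}, x_{n+2}) ≤ d(x_n, x_{n+1}) for all n and d(x_{2k−1}, x_{2k}) ≤ c^k d(x_0, x_1) for all k ≥ 1 with some c ∈ (0,1), and the subsequences {x_{2n}} and {x_{2n+1}} lie in closed sets A and B respectively, then {x_n} converges to a point x* ∈ A ∩ B and d(x_n, x*) ≤ M (√c)^n for some constant M (R-linear convergence with rate √c). -/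
open Metric Filter

/-- Tail-summation argument: a sequence with nonincreasing consecutive distances and
geometrically decaying odd-step distances, whose even terms lie in a closed set `A` and
odd terms in a closed set `B`, converges to a point of `A ∩ B` R-linearly with rate `√c`. -/
theorem stmt_17 {X : Type*} [MetricSpace X] [CompleteSpace X] (A B : Set X)
    (hA : IsClosed A) (hB : IsClosed B) (c : ℝ) (hc : c ∈ Set.Ioo (0:ℝ) 1)
    (x : ℕ → X)
    (hmono : ∀ n : ℕ, dist (x (n + 1)) (x (n + 2)) ≤ dist (x n) (x (n + 1)))
    (hgeo : ∀ k : ℕ, 1 ≤ k → dist (x (2 * k - 1)) (x (2 * k)) ≤ c ^ k * dist (x 0) (x 1))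
    (hxA : ∀ n : ℕ, x (2 * n) ∈ A) (hxB : ∀ n : ℕ, x (2 * n + 1) ∈ B) :
    ∃ p ∈ A ∩ B, Tendsto x atTop (nhds p) ∧
      ∃ M : ℝ, ∀ n : ℕ, dist (x n) p ≤ M * Real.sqrt c ^ n := by
  obtain ⟨hc0, hc1⟩ := hc
  set r := Real.sqrt c with hr
  have hr0 : 0 ≤ r := Real.sqrt_nonneg c
  have hr1 : r < 1 := by
    rw [hr, show (1:ℝ) = Real.sqrt 1 by simp]
    exact Real.sqrt_lt_sqrt hc0.le hc1
  have hrsq : r ^ 2 = c := Real.sq_sqrt hc0.le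
  set C := dist (x 0) (x 1) with hC
  have hmono' : ∀ m n, m ≤ n → dist (x n) (x (n+1)) ≤ dist (x m) (x (m+1)) := by
    intro m n h
    induction n with
    | zero => simp [Nat.le_zero.mp h]
    | succ n ih =>
      rcases Nat.lt_or_ge m (n+1) with h' | h'
      · calc dist (x (n+1)) (x (n+1+1)) ≤ dist (x n) (x (n+1)) := hmono n
          _ ≤ _ := ih (Nat.lt_succ_iff.mp h')
      · have : m = n + 1 := le_antisymm h h'
        simp [this]
  have key : ∀ n, dist (x n) (x (n+1)) ≤ C * r ^ n := by
    intro n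
    rcases Nat.eq_zero_or_pos n with rfl | hn
    · simp [hC]
    · set k := (n+1)/2 with hk
      have hk1 : 1 ≤ k := by omega
      have h2k : 2*k - 1 ≤ n := by omega
      have h2k' : n ≤ 2*k := by omega
      calc dist (x n) (x (n+1)) ≤ dist (x (2*k-1)) (x (2*k-1+1)) := hmono' _ _ h2k
        _ = dist (x (2*k-1)) (x (2*k)) := by congr 2; omega
        _ ≤ c ^ k * C := hgeo k hk1
        _ = r ^ (2*k) * C := by rw [pow_mul, hrsq]
        _ ≤ r ^ n * C := by
            apply mul_le_mul_of_nonneg_right _ dist_nonneg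
            exact pow_le_pow_of_le_one hr0 hr1.le h2k'
        _ = C * r ^ n := mul_comm _ _
  have hcauchy : CauchySeq x := cauchySeq_of_le_geometric r C hr1 key
  obtain ⟨p, hp⟩ := cauchySeq_tendsto_of_complete hcauchy
  have hsubA : Tendsto (fun n => x (2*n)) atTop (nhds p) :=
    hp.comp (Filter.tendsto_atTop_atTop.mpr fun b => ⟨b, fun a ha => by omega⟩)
  have hsubB : Tendsto (fun n => x (2*n+1)) atTop (nhds p) :=
    hp.comp (Filter.tendsto_atTop_atTop.mpr fun b => ⟨b, fun a ha => by omega⟩)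
  refine ⟨p, ⟨hA.mem_of_tendsto hsubA (Filter.Eventually.of_forall hxA),
    hB.mem_of_tendsto hsubB (Filter.Eventually.of_forall hxB)⟩, hp, C/(1-r), fun n => ?_⟩
  calc dist (x n) p ≤ C * r ^ n / (1 - r) :=
        dist_le_of_le_geometric_of_tendsto r C hr1 key hp n
    _ = C / (1 - r) * r ^ n := by ring
end
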